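/- If x, y, and [x,y] = x⁻¹y⁻¹xy are all monic commutators in the pure braid group P_n, then σ([x,y]) = σ(x) ∪ σ(y). -/
import Mathlib


/-!
Common setup: the pure braid group `P_n` as a presented group, the subgroups
`P_S` and `Q_S`, the characterization of the homomorphisms `φ_S`, the support
`σ(x)`, and monic commutators.
-/

/-- The free-group generator corresponding to the pure braid generator
`p_{a,b}` for `a < b` (indices in `Fin n`, so strand `i+1` of `{1,…,n}`
corresponds to `i : Fin n`). -/
def pf {n : ℕ} (a b : Fin n) (h : a < b) :
    FreeGroup {q : Fin n × Fin n // q.1 < q.2} :=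
  FreeGroup.of ⟨(a, b), h⟩

/-- The defining relations (A), (B), (C) of the pure braid group `P_n`,
each written in the form `lhs⁻¹ * rhs` for an equation `lhs = rhs`. -/
def braidRels (n : ℕ) : Set (FreeGroup {q : Fin n × Fin n // q.1 < q.2}) :=
  -- (A) first equality: p_{a,b} p_{a,c} p_{b,c} = p_{a,c} p_{b,c} p_{a,b}
  {r | ∃ (a b c : Fin n) (hab : a < b) (hbc : b < c),
      r = (pf a b hab * pf a c (hab.trans hbc) * pf b c hbc)⁻¹ *
          (pf a c (hab.trans hbc) * pf b c hbc * pf a b hab)} ∪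
  -- (A) second equality: p_{a,b} p_{a,c} p_{b,c} = p_{b,c} p_{a,b} p_{a,c}
  {r | ∃ (a b c : Fin n) (hab : a < b) (hbc : b < c),
      r = (pf a b hab * pf a c (hab.trans hbc) * pf b c hbc)⁻¹ *
          (pf b c hbc * pf a b hab * pf a c (hab.trans hbc))} ∪
  -- (B) first: p_{a,b} p_{c,d} = p_{c,d} p_{a,b}
  {r | ∃ (a b c d : Fin n) (hab : a < b) (hbc : b < c) (hcd : c < d),
      r = (pf a b hab * pf c d hcd)⁻¹ * (pf c d hcd * pf a b hab)} ∪
  -- (B) second: p_{a,d} p_{b,c} = p_{b,c} p_{a,d}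
  {r | ∃ (a b c d : Fin n) (hab : a < b) (hbc : b < c) (hcd : c < d),
      r = (pf a d (hab.trans (hbc.trans hcd)) * pf b c hbc)⁻¹ *
          (pf b c hbc * pf a d (hab.trans (hbc.trans hcd)))} ∪
  -- (C): p_{a,c} (p_{b,c}⁻¹ p_{b,d} p_{b,c}) = (p_{b,c}⁻¹ p_{b,d} p_{b,c}) p_{a,c}
  {r | ∃ (a b c d : Fin n) (hab : a < b) (hbc : b < c) (hcd : c < d),
      r = (pf a c (hab.trans hbc) * ((pf b c hbc)⁻¹ * pf b d (hbc.trans hcd) * pf b c hbc))⁻¹ *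
          ((pf b c hbc)⁻¹ * pf b d (hbc.trans hcd) * pf b c hbc * pf a c (hab.trans hbc))}

/-- The pure braid group `P_n`, given by the presentation above. -/
abbrev PB (n : ℕ) := PresentedGroup (braidRels n)

/-- The generator `p_{a,b}` of the pure braid group, for `a < b`. -/
def p {n : ℕ} (a b : Fin n) (h : a < b) : PB n := PresentedGroup.of ⟨(a, b), h⟩

/-- `P_S`: the subgroup of `P_n` generated by all `p_{a,b}` with `a ∈ S` and `b ∈ S`. -/
def PS {n : ℕ} (S : Set (Fin n)) : Subgroup (PB n) :=
  Subgroup.closure {x | ∃ (a b : Fin n) (h : a < b), a ∈ S ∧ b ∈ S ∧ x = p a b h}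

/-- `Q_S`: the subgroup of `P_n` generated by all `p_{a,b}` with `a ∈ S` or `b ∈ S`. -/
def QS {n : ℕ} (S : Set (Fin n)) : Subgroup (PB n) :=
  Subgroup.closure {x | ∃ (a b : Fin n) (h : a < b), (a ∈ S ∨ b ∈ S) ∧ x = p a b h}

/-- `IsPhi S φ` says that `φ : P_n → P_n` is the homomorphism `φ_S`, i.e. it sends
`p_{a,b}` to itself if `a ∉ S` and `b ∉ S`, and to `1` otherwise. -/
def IsPhi {n : ℕ} (S : Set (Fin n)) (φ : PB n →* PB n) : Prop :=
  ∀ (a b : Fin n) (h : a < b),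
    (a ∉ S ∧ b ∉ S → φ (p a b h) = p a b h) ∧ ((a ∈ S ∨ b ∈ S) → φ (p a b h) = 1)

/-- The support `σ(x)` of `x ∈ P_n`: the intersection of all `S` with `x ∈ P_S`. -/
def support {n : ℕ} (x : PB n) : Set (Fin n) := ⋂₀ {S | x ∈ PS S}

/-- Monic commutators: the smallest set of elements of `P_n` containing all
`p_{a,b}` and `p_{a,b}⁻¹` and closed under taking nontrivial commutators
`[x,y] = x⁻¹ y⁻¹ x y`. -/
inductive IsMonic {n : ℕ} : PB n → Prop
  | of (a b : Fin n) (h : a < b) : IsMonic (p a b h)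
  | inv (a b : Fin n) (h : a < b) : IsMonic (p a b h)⁻¹
  | comm (x y : PB n) : IsMonic x → IsMonic y → x⁻¹ * y⁻¹ * x * y ≠ 1 →
      IsMonic (x⁻¹ * y⁻¹ * x * y)

section Aux

open scoped Classical

variable {n : ℕ}

/-- Relations hold in the presented group. -/
lemma mk_rel_eq_one {r : FreeGroup {q : Fin n × Fin n // q.1 < q.2}}
    (hr : r ∈ braidRels n) : PresentedGroup.mk (braidRels n) r = 1 :=
  (QuotientGroup.eq_one_iff r).mpr (Subgroup.subset_normalClosure hr)

lemma relA1 (a b c : Fin n) (hab : a < b) (hbc : b < c) :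
    p a b hab * p a c (hab.trans hbc) * p b c hbc =
      p a c (hab.trans hbc) * p b c hbc * p a b hab := by
  have h := mk_rel_eq_one (n := n)
    (Or.inl (Or.inl (Or.inl (Or.inl ⟨a, b, c, hab, hbc, rfl⟩))))
  simp only [map_mul, map_inv, inv_mul_eq_one] at h
  exact h

lemma relA2 (a b c : Fin n) (hab : a < b) (hbc : b < c) :
    p a b hab * p a c (hab.trans hbc) * p b c hbc =
      p b c hbc * p a b hab * p a c (hab.trans hbc) := by
  have h := mk_rel_eq_one (n := n)
    (Or.inl (Or.inl (Or.inl (Or.inr ⟨a, b, c, hab, hbc, rfl⟩))))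
  simp only [map_mul, map_inv, inv_mul_eq_one] at h
  exact h

lemma relB1 (a b c d : Fin n) (hab : a < b) (hbc : b < c) (hcd : c < d) :
    p a b hab * p c d hcd = p c d hcd * p a b hab := by
  have h := mk_rel_eq_one (n := n)
    (Or.inl (Or.inl (Or.inr ⟨a, b, c, d, hab, hbc, hcd, rfl⟩)))
  simp only [map_mul, map_inv, inv_mul_eq_one] at h
  exact h

lemma relB2 (a b c d : Fin n) (hab : a < b) (hbc : b < c) (hcd : c < d) :
    p a d (hab.trans (hbc.trans hcd)) * p b c hbc =
      p b c hbc * p a d (hab.trans (hbc.trans hcd)) := by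
  have h := mk_rel_eq_one (n := n)
    (Or.inl (Or.inr ⟨a, b, c, d, hab, hbc, hcd, rfl⟩))
  simp only [map_mul, map_inv, inv_mul_eq_one] at h
  exact h

lemma relC (a b c d : Fin n) (hab : a < b) (hbc : b < c) (hcd : c < d) :
    p a c (hab.trans hbc) * ((p b c hbc)⁻¹ * p b d (hbc.trans hcd) * p b c hbc) =
      (p b c hbc)⁻¹ * p b d (hbc.trans hcd) * p b c hbc * p a c (hab.trans hbc) := by
  have h := mk_rel_eq_one (n := n)
    (Or.inr ⟨a, b, c, d, hab, hbc, hcd, rfl⟩)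
  simp only [map_mul, map_inv, inv_mul_eq_one] at h
  exact h

/-- The map on generators underlying `φ_S`. -/
noncomputable def phiFun (S : Set (Fin n)) : {q : Fin n × Fin n // q.1 < q.2} → PB n :=
  fun q => if q.1.1 ∈ S ∨ q.1.2 ∈ S then 1 else p q.1.1 q.1.2 q.2

lemma phiFun_lift (S : Set (Fin n)) :
    ∀ r ∈ braidRels n, FreeGroup.lift (phiFun S) r = 1 := by
  rintro r (((((⟨a,b,c,hab,hbc,rfl⟩ | ⟨a,b,c,hab,hbc,rfl⟩) | ⟨a,b,c,d,hab,hbc,hcd,rfl⟩) |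
    ⟨a,b,c,d,hab,hbc,hcd,rfl⟩) | ⟨a,b,c,d,hab,hbc,hcd,rfl⟩)) <;>
    simp only [pf, map_mul, map_inv, FreeGroup.lift_apply_of, phiFun]
  · by_cases ha : a ∈ S <;> by_cases hb : b ∈ S <;> by_cases hc : c ∈ S <;>
      simp [ha, hb, hc, relA1 a b c hab hbc] <;> group
  · by_cases ha : a ∈ S <;> by_cases hb : b ∈ S <;> by_cases hc : c ∈ S <;>
      simp [ha, hb, hc, relA2 a b c hab hbc] <;> group
  · by_cases ha : a ∈ S <;> by_cases hb : b ∈ S <;> by_cases hc : c ∈ S <;>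
      by_cases hd : d ∈ S <;>
      simp [ha, hb, hc, hd, relB1 a b c d hab hbc hcd] <;> group
  · by_cases ha : a ∈ S <;> by_cases hb : b ∈ S <;> by_cases hc : c ∈ S <;>
      by_cases hd : d ∈ S <;>
      simp [ha, hb, hc, hd, relB2 a b c d hab hbc hcd] <;> group
  · by_cases ha : a ∈ S <;> by_cases hb : b ∈ S <;> by_cases hc : c ∈ S <;>
      by_cases hd : d ∈ S <;>
      simp [ha, hb, hc, hd, relC a b c d hab hbc hcd] <;> group

/-- The homomorphism `φ_S`. -/
noncomputable def phi (S : Set (Fin n)) : PB n →* PB n :=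
  PresentedGroup.toGroup (phiFun_lift S)

lemma isPhi_phi (S : Set (Fin n)) : IsPhi S (phi S) := by
  intro a b h
  constructor
  · intro ⟨ha, hb⟩
    show PresentedGroup.toGroup _ (PresentedGroup.of _) = _
    rw [PresentedGroup.toGroup.of]
    simp [phiFun, ha, hb]
  · intro hab
    show PresentedGroup.toGroup _ (PresentedGroup.of _) = _
    rw [PresentedGroup.toGroup.of]
    simp only [phiFun, if_pos hab]

lemma phi_of (S : Set (Fin n)) (a b : Fin n) (h : a < b) :
    phi S (p a b h) = if a ∈ S ∨ b ∈ S then 1 else p a b h := by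
  rcases (isPhi_phi S a b h) with ⟨h1, h2⟩
  by_cases hab : a ∈ S ∨ b ∈ S
  · rw [if_pos hab]; exact h2 hab
  · rw [if_neg hab]; exact h1 ⟨fun ha => hab (Or.inl ha), fun hb => hab (Or.inr hb)⟩

/-- `φ_S` lands in `P_{Sᶜ}`. -/
lemma phi_mem (S : Set (Fin n)) (x : PB n) : phi S x ∈ PS Sᶜ := by
  have : x ∈ (⊤ : Subgroup (PB n)) := trivial
  rw [← PresentedGroup.closure_range_of (braidRels n)] at this
  refine Subgroup.closure_induction (fun g hg => ?_)
    (by rw [map_one]; exact Subgroup.one_mem _)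
    (fun g g' _ _ hg hg' => by rw [map_mul]; exact Subgroup.mul_mem _ hg hg')
    (fun g _ hg => by rw [map_inv]; exact Subgroup.inv_mem _ hg) this
  obtain ⟨⟨⟨a, b⟩, hlt⟩, rfl⟩ := hg
  have : PresentedGroup.of (rels := braidRels n) ⟨(a, b), hlt⟩ = p a b hlt := rfl
  rw [this, phi_of]
  by_cases hab : a ∈ S ∨ b ∈ S
  · rw [if_pos hab]; exact Subgroup.one_mem _
  · rw [if_neg hab]
    exact Subgroup.subset_closure
      ⟨a, b, hlt, fun ha => hab (Or.inl ha), fun hb => hab (Or.inr hb), rfl⟩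

/-- `φ_S` fixes `P_U` when `U` is disjoint from `S`. -/
lemma phi_fixes {S U : Set (Fin n)} (hdisj : ∀ a ∈ U, a ∉ S) {x : PB n}
    (hx : x ∈ PS U) : phi S x = x := by
  refine Subgroup.closure_induction (fun g hg => ?_) (by simp)
    (fun g g' _ _ hg hg' => by rw [map_mul, hg, hg'])
    (fun g _ hg => by rw [map_inv, hg]) hx
  obtain ⟨a, b, h, ha, hb, rfl⟩ := hg
  rw [phi_of, if_neg]
  rintro (h' | h')
  · exact hdisj a ha h'
  · exact hdisj b hb h'

/-- Monic commutators are `φ_S`-homogeneous. -/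
lemma monic_phi_dichotomy {x : PB n} (hx : IsMonic x) (S : Set (Fin n)) :
    phi S x = x ∨ phi S x = 1 := by
  induction hx with
  | of a b h =>
      rw [phi_of]
      by_cases hab : a ∈ S ∨ b ∈ S
      · right; rw [if_pos hab]
      · left; rw [if_neg hab]
  | inv a b h =>
      rw [map_inv, phi_of]
      by_cases hab : a ∈ S ∨ b ∈ S
      · right; rw [if_pos hab, inv_one]
      · left; rw [if_neg hab]
  | comm u v _ _ _ ihu ihv =>
      rcases ihu with hu | hu <;> rcases ihv with hv | hv
      · left; simp only [map_mul, map_inv, hu, hv]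
      · right; simp only [map_mul, map_inv, hu, hv]; group
      · right; simp only [map_mul, map_inv, hu, hv]; group
      · right; simp only [map_mul, map_inv, hu, hv]; group

/-- The exponent-sum homomorphism, used to show generators are nontrivial. -/
noncomputable def deg : PB n →* Multiplicative ℤ :=
  PresentedGroup.toGroup (f := fun _ => Multiplicative.ofAdd (1 : ℤ)) (by
    rintro r (((((⟨a,b,c,hab,hbc,rfl⟩ | ⟨a,b,c,hab,hbc,rfl⟩) | ⟨a,b,c,d,hab,hbc,hcd,rfl⟩) |
      ⟨a,b,c,d,hab,hbc,hcd,rfl⟩) | ⟨a,b,c,d,hab,hbc,hcd,rfl⟩)) <;>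
      simp only [pf, map_mul, map_inv, FreeGroup.lift_apply_of] <;> group)

lemma deg_p (a b : Fin n) (h : a < b) :
    deg (p a b h) = Multiplicative.ofAdd (1 : ℤ) := by
  unfold deg p
  exact PresentedGroup.toGroup.of _

lemma p_ne_one (a b : Fin n) (h : a < b) : p a b h ≠ 1 := by
  intro hcon
  have h1 : deg (p a b h) = 1 := by rw [hcon, map_one]
  rw [deg_p] at h1
  simpa using h1

lemma monic_ne_one {x : PB n} (hx : IsMonic x) : x ≠ 1 := by
  induction hx with
  | of a b h => exact p_ne_one a b h
  | inv a b h => simpa using p_ne_one a b h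
  | comm u v _ _ hne _ _ => exact hne

lemma PS_mono {S T : Set (Fin n)} (hST : S ⊆ T) : PS S ≤ PS T := by
  apply Subgroup.closure_mono
  rintro x ⟨a, b, h, ha, hb, rfl⟩
  exact ⟨a, b, h, hST ha, hST hb, rfl⟩

lemma mem_support_iff {x : PB n} {i : Fin n} :
    i ∈ support x ↔ ∀ S : Set (Fin n), x ∈ PS S → i ∈ S := by
  simp [support, Set.mem_sInter]

/-- If `i` is in the support of a monic `x`, then `φ_{{i}}` kills `x`. -/
lemma phi_singleton_eq_one {x : PB n} (hx : IsMonic x) {i : Fin n}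
    (hi : i ∈ support x) : phi {i} x = 1 := by
  rcases monic_phi_dichotomy hx {i} with hfix | h1
  · exfalso
    have hmem : x ∈ PS ({i}ᶜ) := hfix ▸ phi_mem {i} x
    have := mem_support_iff.mp hi _ hmem
    simp at this
  · exact h1

end Aux

/-- if `x`, `y`, and `[x,y] = x⁻¹y⁻¹xy` are all monic
commutators, then `σ([x,y]) = σ(x) ∪ σ(y)`. -/
theorem support_comm_eq (n : ℕ) (hn : 0 < n) (x y : PB n)
    (hx : IsMonic x) (hy : IsMonic y) (hxy : IsMonic (x⁻¹ * y⁻¹ * x * y)) :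
    support (x⁻¹ * y⁻¹ * x * y) = support x ∪ support y := by
  apply Set.Subset.antisymm
  · intro i hi
    by_contra hcon
    rw [Set.mem_union] at hcon
    push_neg at hcon
    obtain ⟨hix, hiy⟩ := hcon
    rw [mem_support_iff] at hix hiy
    push_neg at hix hiy
    obtain ⟨S, hxS, hiS⟩ := hix
    obtain ⟨T, hyT, hiT⟩ := hiy
    have hxST : x ∈ PS (S ∪ T) := PS_mono Set.subset_union_left hxS
    have hyST : y ∈ PS (S ∪ T) := PS_mono Set.subset_union_right hyT
    have hcomm : x⁻¹ * y⁻¹ * x * y ∈ PS (S ∪ T) :=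
      Subgroup.mul_mem _ (Subgroup.mul_mem _ (Subgroup.mul_mem _
        (Subgroup.inv_mem _ hxST) (Subgroup.inv_mem _ hyST)) hxST) hyST
    rcases mem_support_iff.mp hi _ hcomm with h | h
    · exact hiS h
    · exact hiT h
  · rintro i (hi | hi)
    · rw [mem_support_iff]
      intro U hU
      by_contra hiU
      have hfix : phi {i} (x⁻¹ * y⁻¹ * x * y) = x⁻¹ * y⁻¹ * x * y :=
        phi_fixes (by rintro a ha rfl; exact hiU ha) hU
      have h1 : phi {i} x = 1 := phi_singleton_eq_one hx hi
      have hkill : phi {i} (x⁻¹ * y⁻¹ * x * y) = 1 := by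
        simp only [map_mul, map_inv, h1]; group
      exact monic_ne_one hxy (hfix ▸ hkill)
    · rw [mem_support_iff]
      intro U hU
      by_contra hiU
      have hfix : phi {i} (x⁻¹ * y⁻¹ * x * y) = x⁻¹ * y⁻¹ * x * y :=
        phi_fixes (by rintro a ha rfl; exact hiU ha) hU
      have h1 : phi {i} y = 1 := phi_singleton_eq_one hy hi
      have hkill : phi {i} (x⁻¹ * y⁻¹ * x * y) = 1 := by
        simp only [map_mul, map_inv, h1]; group
      exact monic_ne_one hxy (hfix ▸ hkill)
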